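/- Let Γ, Σ̂ be symmetric positive semidefinite K×K real matrices, Ω a symmetric positive semidefinite M×M real matrix, η₁, η₂ ≥ 0, and ε ∈ [0, 1). Suppose that for all b ∈ ℝ^K: (1 − ε)·(‖b‖² + η₁·bᵀΓb) ≤ bᵀΣ̂b + η₁·bᵀΓb ≤ (1 + ε)·(‖b‖² + η₁·bᵀΓb). Then for every K×M real matrix B, writing N(B) = ‖(I + η₁Γ)^{1/2} B (I + η₂Ω)^{1/2}‖_F and Q(B)² = ‖B‖_F² + η₁·tr(BᵀΓB) + η₂·tr(BΩBᵀΣ̂) + η₁η₂·tr(BᵀΓBΩ), one has (1 − ε)·N(B)² ≤ Q(B)² ≤ (1 + ε)·N(B)²; in particular, if ε ≤ 3/4 then (1/2)·N(B) ≤ Q(B) ≤ 2·N(B). (This is the deterministic norm-equivalence content of the paper's Lemma 8, conclusion (eqn:graph:normbound), where the hypothesis is the empirical-norm sandwich supplied by Proposition 3.) -/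

import Mathlib

open Matrix
open scoped MatrixOrder

set_option maxHeartbeats 1000000

/-- The squared Frobenius norm of a real matrix. -/
noncomputable def frobSq {m n : Type*} [Fintype m] [Fintype n] (A : Matrix m n ℝ) : ℝ :=
  ∑ i, ∑ j, A i j ^ 2

/-- Column-sum formula for `tr (Wᵀ A W)`. -/
lemma trace_quad_eq_sum_cols {K n : ℕ} (A : Matrix (Fin K) (Fin K) ℝ)
    (W : Matrix (Fin K) (Fin n) ℝ) :
    (Wᵀ * A * W).trace = ∑ j, (fun i => W i j) ⬝ᵥ A *ᵥ (fun i => W i j) := by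
  simp only [Matrix.trace, Matrix.diag, Matrix.mul_apply, Matrix.transpose_apply,
    dotProduct, Matrix.mulVec, Finset.sum_mul, Finset.mul_sum]
  refine Finset.sum_congr rfl fun j _ => ?_
  rw [Finset.sum_comm]
  exact Finset.sum_congr rfl fun i _ => Finset.sum_congr rfl fun k _ => by ring

lemma trace_transpose_mul_eq {K n : ℕ} (W : Matrix (Fin K) (Fin n) ℝ) :
    (Wᵀ * W).trace = ∑ j, ∑ i, (W i j) ^ 2 := by
  simp [Matrix.trace, Matrix.diag, Matrix.mul_apply, sq]

theorem graph_penalty_norm_equivalence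
    {K M : ℕ} (Γ Shat : Matrix (Fin K) (Fin K) ℝ) (Ω : Matrix (Fin M) (Fin M) ℝ)
    (hΓ : Γ.PosSemidef) (hShat : Shat.PosSemidef) (hΩ : Ω.PosSemidef)
    (η₁ η₂ : ℝ) (hη₁ : 0 ≤ η₁) (hη₂ : 0 ≤ η₂)
    (ε : ℝ) (hε : ε ∈ Set.Ico (0 : ℝ) 1)
    (hsand : ∀ b : Fin K → ℝ,
      (1 - ε) * ((∑ i, b i ^ 2) + η₁ * (b ⬝ᵥ Γ *ᵥ b)) ≤ b ⬝ᵥ Shat *ᵥ b + η₁ * (b ⬝ᵥ Γ *ᵥ b) ∧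
        b ⬝ᵥ Shat *ᵥ b + η₁ * (b ⬝ᵥ Γ *ᵥ b) ≤ (1 + ε) * ((∑ i, b i ^ 2) + η₁ * (b ⬝ᵥ Γ *ᵥ b)))
    -- `R₁` and `R₂` are the unique positive semidefinite square roots of
    -- `I + η₁ • Γ` and `I + η₂ • Ω`, respectively.
    (R₁ : Matrix (Fin K) (Fin K) ℝ) (R₂ : Matrix (Fin M) (Fin M) ℝ)
    (hR₁ : R₁.PosSemidef) (hR₂ : R₂.PosSemidef)
    (hR₁sq : R₁ * R₁ = 1 + η₁ • Γ) (hR₂sq : R₂ * R₂ = 1 + η₂ • Ω)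
    (B : Matrix (Fin K) (Fin M) ℝ)
    (N QB2 : ℝ)
    (hN : N = Real.sqrt (frobSq (R₁ * B * R₂)))
    (hQB2 : QB2 = frobSq B + η₁ * (Bᵀ * Γ * B).trace + η₂ * (B * Ω * Bᵀ * Shat).trace
        + η₁ * η₂ * (Bᵀ * Γ * B * Ω).trace) :
    (1 - ε) * N ^ 2 ≤ QB2 ∧ QB2 ≤ (1 + ε) * N ^ 2 ∧
      (ε ≤ 3 / 4 → (1 / 2) * N ≤ Real.sqrt QB2 ∧ Real.sqrt QB2 ≤ 2 * N) := by
  obtain ⟨hε0, hε1⟩ := hε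
  -- transposes of the psd matrices
  have hR₂t : R₂ᵀ = R₂ := by
    rw [← Matrix.conjTranspose_eq_transpose_of_trivial]; exact hR₂.1
  have hΓt : Γᵀ = Γ := by
    rw [← Matrix.conjTranspose_eq_transpose_of_trivial]; exact hΓ.1
  have hR₁t : R₁ᵀ = R₁ := by
    rw [← Matrix.conjTranspose_eq_transpose_of_trivial]; exact hR₁.1
  -- frobSq as a trace
  have hfrob : ∀ {p q : ℕ} (A : Matrix (Fin p) (Fin q) ℝ), frobSq A = (Aᵀ * A).trace := by
    intro p q A
    rw [trace_transpose_mul_eq, frobSq, Finset.sum_comm]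
  -- square root of Ω
  set S := CFC.sqrt Ω with hS
  have hSt : Sᵀ = S := by
    rw [← Matrix.conjTranspose_eq_transpose_of_trivial]; exact (Matrix.nonneg_iff_posSemidef.mp (CFC.sqrt_nonneg Ω)).1
  have hSS : S * S = Ω := CFC.sqrt_mul_sqrt_self Ω (Matrix.nonneg_iff_posSemidef.mpr hΩ)
  set D := B * S with hD
  set C := B * R₂ with hC
  -- the per-vector quantities
  set f : (Fin K → ℝ) → ℝ := fun b => (∑ i, b i ^ 2) + η₁ * (b ⬝ᵥ Γ *ᵥ b) with hf
  set g : (Fin K → ℝ) → ℝ := fun b => b ⬝ᵥ Shat *ᵥ b + η₁ * (b ⬝ᵥ Γ *ᵥ b) with hg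
  have hfnonneg : ∀ b, 0 ≤ f b := by
    intro b
    have h1 : 0 ≤ ∑ i, b i ^ 2 := Finset.sum_nonneg fun i _ => sq_nonneg _
    have h2 : 0 ≤ b ⬝ᵥ Γ *ᵥ b := by
      have := hΓ.dotProduct_mulVec_nonneg b
      simpa using this
    positivity
  -- generic column decomposition of trace quantities
  have hFdec : ∀ {n : ℕ} (W : Matrix (Fin K) (Fin n) ℝ),
      (Wᵀ * W).trace + η₁ * (Wᵀ * Γ * W).trace = ∑ j, f (fun i => W i j) := by
    intro n W
    rw [trace_transpose_mul_eq, trace_quad_eq_sum_cols, hf, Finset.mul_sum,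
      ← Finset.sum_add_distrib]
  have hGdec : ∀ {n : ℕ} (W : Matrix (Fin K) (Fin n) ℝ),
      (Wᵀ * Shat * W).trace + η₁ * (Wᵀ * Γ * W).trace = ∑ j, g (fun i => W i j) := by
    intro n W
    rw [trace_quad_eq_sum_cols, trace_quad_eq_sum_cols, hg, Finset.mul_sum,
      ← Finset.sum_add_distrib]
  -- key scalar quantities
  set X : ℝ := ∑ j, f (fun i => B i j) with hX
  set TI : ℝ := ∑ j, f (fun i => D i j) with hTI
  set TS : ℝ := ∑ j, g (fun i => D i j) with hTS
  have hXnn : 0 ≤ X := Finset.sum_nonneg fun j _ => hfnonneg _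
  have hTInn : 0 ≤ TI := Finset.sum_nonneg fun j _ => hfnonneg _
  have hTlo : (1 - ε) * TI ≤ TS := by
    rw [hTI, hTS, Finset.mul_sum]
    exact Finset.sum_le_sum fun j _ => (hsand _).1
  have hThi : TS ≤ (1 + ε) * TI := by
    rw [hTI, hTS, Finset.mul_sum]
    exact Finset.sum_le_sum fun j _ => (hsand _).2
  -- rewriting Ω-traces through D
  have hDtrace : ∀ (A : Matrix (Fin K) (Fin K) ℝ),
      (Bᵀ * A * B * Ω).trace = (Dᵀ * A * D).trace := by
    intro A
    have h1 : Dᵀ * A * D = S * (Bᵀ * A * B * S) := by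
      rw [hD, Matrix.transpose_mul, hSt]
      simp only [Matrix.mul_assoc]
    rw [h1, Matrix.trace_mul_comm S (Bᵀ * A * B * S), ← hSS]
    simp only [Matrix.mul_assoc]
  -- expanding C-traces
  have e3 : ∀ (A : Matrix (Fin K) (Fin K) ℝ),
      (Cᵀ * A * C).trace = (Bᵀ * A * B).trace + η₂ * (Bᵀ * A * B * Ω).trace := by
    intro A
    have h1 : Cᵀ * A * C = R₂ * (Bᵀ * A * B * R₂) := by
      rw [hC, Matrix.transpose_mul, hR₂t]
      simp only [Matrix.mul_assoc]
    have h2 : Bᵀ * A * B * R₂ * R₂ = Bᵀ * A * B + η₂ • (Bᵀ * A * B * Ω) := by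
      calc Bᵀ * A * B * R₂ * R₂ = Bᵀ * A * B * (R₂ * R₂) := by
            simp only [Matrix.mul_assoc]
        _ = Bᵀ * A * B + η₂ • (Bᵀ * A * B * Ω) := by
            rw [hR₂sq, Matrix.mul_add, Matrix.mul_one, Matrix.mul_smul]
    rw [h1, Matrix.trace_mul_comm, h2, Matrix.trace_add, Matrix.trace_smul, smul_eq_mul]
  -- N² = X + η₂ TI
  have hNsq : N ^ 2 = X + η₂ * TI := by
    have hfs : 0 ≤ frobSq (R₁ * B * R₂) :=
      Finset.sum_nonneg fun i _ => Finset.sum_nonneg fun j _ => sq_nonneg _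
    have hN2 : N ^ 2 = frobSq (R₁ * B * R₂) := by
      rw [hN, Real.sq_sqrt hfs]
    rw [hN2, hfrob]
    have e1 : (R₁ * B * R₂)ᵀ * (R₁ * B * R₂) = Cᵀ * (R₁ * R₁) * C := by
      rw [hC]
      simp only [Matrix.transpose_mul, hR₁t, hR₂t, Matrix.mul_assoc]
    rw [e1, hR₁sq]
    have e2 : Cᵀ * (1 + η₁ • Γ) * C = Cᵀ * C + η₁ • (Cᵀ * Γ * C) := by
      rw [Matrix.mul_add, Matrix.add_mul, Matrix.mul_one, Matrix.mul_smul, Matrix.smul_mul]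
    rw [e2, Matrix.trace_add, Matrix.trace_smul, smul_eq_mul]
    have e4 : (Cᵀ * C).trace = (Bᵀ * B).trace + η₂ * (Bᵀ * B * Ω).trace := by
      have := e3 1
      simpa [Matrix.mul_one, Matrix.one_mul] using this
    rw [e4, e3 Γ, hDtrace Γ]
    have d1 : (Bᵀ * B * Ω).trace = (Dᵀ * D).trace := by
      have := hDtrace 1
      simpa [Matrix.mul_one, Matrix.one_mul] using this
    rw [d1]
    have h1 := hFdec B
    have h2 := hFdec D
    rw [← hX] at h1
    rw [← hTI] at h2
    linear_combination h1 + η₂ * h2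
  -- QB2 = X + η₂ TS
  have hQeq : QB2 = X + η₂ * TS := by
    rw [hQB2, hfrob]
    have t1 : (B * Ω * Bᵀ * Shat).trace = (Bᵀ * Shat * B * Ω).trace := by
      rw [show B * Ω * Bᵀ * Shat = (B * Ω) * (Bᵀ * Shat) by simp only [Matrix.mul_assoc],
        Matrix.trace_mul_comm]
      simp only [Matrix.mul_assoc]
    rw [t1, hDtrace Shat, hDtrace Γ]
    have h1 := hFdec B
    have h2 := hGdec D
    rw [← hX] at h1
    rw [← hTS] at h2
    linear_combination h1 + η₂ * h2
  -- main inequalities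
  have hlo : (1 - ε) * N ^ 2 ≤ QB2 := by
    rw [hNsq, hQeq]
    nlinarith [mul_le_mul_of_nonneg_left hTlo hη₂, mul_nonneg hε0 hXnn]
  have hhi : QB2 ≤ (1 + ε) * N ^ 2 := by
    rw [hNsq, hQeq]
    nlinarith [mul_le_mul_of_nonneg_left hThi hη₂, mul_nonneg hε0 hXnn]
  refine ⟨hlo, hhi, fun hε34 => ?_⟩
  have hNnn : 0 ≤ N := hN ▸ Real.sqrt_nonneg _
  constructor
  · have h1 : ((1 / 2 : ℝ) * N) ^ 2 ≤ QB2 := by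
      nlinarith [mul_nonneg (by linarith : (0:ℝ) ≤ 3 / 4 - ε) (sq_nonneg N)]
    calc (1 / 2 : ℝ) * N = Real.sqrt (((1 / 2 : ℝ) * N) ^ 2) := by
          rw [Real.sqrt_sq (by positivity)]
      _ ≤ Real.sqrt QB2 := Real.sqrt_le_sqrt h1
  · have h1 : QB2 ≤ (2 * N) ^ 2 := by
      nlinarith [mul_nonneg (by linarith : (0:ℝ) ≤ 3 - ε) (sq_nonneg N)]
    calc Real.sqrt QB2 ≤ Real.sqrt ((2 * N) ^ 2) := Real.sqrt_le_sqrt h1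
      _ = 2 * N := Real.sqrt_sq (by positivity)
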